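/- Let ⟨A⟩ be a GCNS numerical semigroup with parameters a, k, d, u, B = (b_1,...,b_k), s_1 ≤ ⋯ ≤ s_{k−1}, where d is a POSITIVE integer, and let p be a positive divisor of a with p ≠ a. Let X(a−p) = (x_1, x_2, ..., x_k) be the greedy presentation of a − p. If u*a + d + k − 2 ≥ Σ_{i=1}^{k−1} s_i and s_i ≤ u + 1 for all 1 ≤ i ≤ k−1, then the Frobenius number of the quotient is F(⟨A⟩/p) = (Σ_{i=1}^k x_i) * (a/p) + (a/p − 1)*(u*a + d) − a/p. -/

import Mathlib

/-!
The generators are `a` and `a + b i * c` with `c = u * a + d`, so `N ∈ ⟨A⟩` iff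
`N = t * a + m * c` where `t` is at least the least number `w m` of parts `b i` summing to `m`.
A carry `s i` parts `b i` plus one part `b j` (`j ≤ i`) into `b (i + 1)` plus `b j - 1` never
increases the number of parts (the `s i` are nondecreasing) while it moves weight upwards; hence
a greedy representation is optimal and `w (a - p) = ∑ x i`. Removing one unit from `m` costs at
most `u` extra parts (as `s i ≤ u + 1`), so `w (ℓ * p) ≤ ∑ x i + (q - 1 - ℓ) * p * u`, `q = a / p`.

If `p * F = (∑ x i) * a + (a - p) * c - a` were `t * a + m * c`, then `m ≡ a - p [ZMOD a]`, and
`m = a - p` needs `t < w m` while `m > a - p` makes `t` negative. If `F < n`, pick `ℓ < q` with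
`n ≡ ℓ * c [ZMOD q]`: then `a ∣ p * n - ℓ * p * c`, and the bound on `w (ℓ * p)` makes the
quotient at least `w (ℓ * p)`.
-/

open Finset

def weightedSum (k : ℕ) (c y : ℕ → ℕ) : ℕ := ∑ i ∈ Icc 1 k, c i * y i

section WeightedSum
variable {k : ℕ} {c : ℕ → ℕ}

lemma weightedSum_add (y z : ℕ → ℕ) :
    weightedSum k c (y + z) = weightedSum k c y + weightedSum k c z := by
  simp only [weightedSum, Pi.add_apply, mul_add, sum_add_distrib]

lemma weightedSum_single (i n : ℕ) :
    weightedSum k c (Pi.single i n) = if i ∈ Icc 1 k then c i * n else 0 := by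
  simp [weightedSum, Pi.single_apply, mul_ite]

lemma weightedSum_single_of_mem {i : ℕ} (hi : i ∈ Icc 1 k) (n : ℕ) :
    weightedSum k c (Pi.single i n) = c i * n := by
  rw [weightedSum_single, if_pos hi]

lemma weightedSum_single_add_single_add {i j : ℕ} (hi : i ∈ Icc 1 k) (hj : j ∈ Icc 1 k)
    (n m : ℕ) (w : ℕ → ℕ) :
    weightedSum k c (Pi.single i n + Pi.single j m + w) =
      c i * n + c j * m + weightedSum k c w := by
  rw [weightedSum_add, weightedSum_add, weightedSum_single_of_mem hi, weightedSum_single_of_mem hj]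

lemma weightedSum_succ (j : ℕ) (y : ℕ → ℕ) :
    weightedSum (j + 1) c y = weightedSum j c y + c (j + 1) * y (j + 1) :=
  sum_Icc_succ_top (Nat.le_add_left 1 j) _

lemma weightedSum_one (y : ℕ → ℕ) : weightedSum k 1 y = ∑ i ∈ Icc 1 k, y i := by
  simp [weightedSum]

lemma weightedSum_le_mul_weightedSum_one {C : ℕ} (hc : ∀ i ∈ Icc 1 k, c i ≤ C) (y : ℕ → ℕ) :
    weightedSum k c y ≤ C * weightedSum k 1 y := by
  rw [weightedSum, weightedSum, mul_sum]
  exact sum_le_sum fun i hi => by simpa using Nat.mul_le_mul_right (y i) (hc i hi)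

lemma weightedSum_one_le (hc : ∀ i ∈ Icc 1 k, 1 ≤ c i) (y : ℕ → ℕ) :
    weightedSum k 1 y ≤ weightedSum k c y :=
  sum_le_sum fun i hi => Nat.mul_le_mul_right (y i) (hc i hi)

lemma exists_ne_zero_of_weightedSum_ne_zero {y : ℕ → ℕ} (hy : weightedSum k c y ≠ 0) :
    ∃ j ∈ Icc 1 k, y j ≠ 0 := by
  by_contra! h
  exact hy (sum_eq_zero fun i hi => by rw [h i hi, mul_zero])

lemma weightedSum_update_zero (y : ℕ → ℕ) (n : ℕ) :
    weightedSum k c (Function.update y 0 n) = weightedSum k c y :=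
  sum_congr rfl fun i hi => by
    rw [Function.update_of_ne (by have := (mem_Icc.1 hi).1; omega)]

end WeightedSum

section Greedy
variable {k : ℕ} {b s : ℕ → ℕ}

structure IsGreedy (k : ℕ) (s y : ℕ → ℕ) : Prop where
  le : ∀ i, 1 ≤ i → i ≤ k - 1 → y i ≤ s i
  eq_zero_of_eq : ∀ i, 2 ≤ i → i ≤ k - 1 → y i = s i → ∀ j, 1 ≤ j → j < i → y j = 0

lemma monotoneOn_Icc_one_of_pred_le (hsmono : ∀ i, 2 ≤ i → i ≤ k - 1 → s (i - 1) ≤ s i) :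
    MonotoneOn s (Set.Icc 1 (k - 1)) := by
  rintro i ⟨hi, -⟩ j ⟨-, hj⟩ hij
  induction j, hij using Nat.le_induction with
  | base => exact le_rfl
  | succ j hij ih => exact (ih (by omega)).trans (by simpa using hsmono (j + 1) (by omega) hj)

/-- `b j - 1` is `s (j - 1)` parts `b (j - 1)`; for `j = 1` the single sits at the ignored
index `0`. -/
lemma weightedSum_single_pred_add_one (hb1 : b 1 = 1)
    (hbrec : ∀ i, 1 ≤ i → i ≤ k - 1 → b (i + 1) = s i * b i + 1) {j : ℕ} (hj : j ∈ Icc 1 k) :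
    weightedSum k b (Pi.single (j - 1) (s (j - 1))) + 1 = b j := by
  obtain ⟨hj1, hjk⟩ := mem_Icc.1 hj
  rcases hj1.eq_or_lt with rfl | hj2
  · simp [weightedSum_single, hb1]
  · have := hbrec (j - 1) (by omega) (by omega)
    rw [Nat.sub_add_cancel hj1] at this
    rw [weightedSum_single_of_mem (mem_Icc.2 ⟨by omega, by omega⟩), this, mul_comm]

lemma weightedSum_one_single_pred_le {j B : ℕ} (hB : 2 ≤ j → s (j - 1) ≤ B) :
    weightedSum k 1 (Pi.single (j - 1) (s (j - 1))) ≤ B := by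
  rw [weightedSum_single]
  split_ifs with h
  · simpa using hB (by have := (mem_Icc.1 h).1; omega)
  · exact Nat.zero_le B

lemma weightedSum_carry (hb1 : b 1 = 1)
    (hbrec : ∀ i, 1 ≤ i → i ≤ k - 1 → b (i + 1) = s i * b i + 1)
    {i j : ℕ} (hj : 1 ≤ j) (hji : j ≤ i) (hik : i ≤ k - 1) (w : ℕ → ℕ) :
    weightedSum k b (Pi.single (i + 1) 1 + Pi.single (j - 1) (s (j - 1)) + w) =
      weightedSum k b (Pi.single i (s i) + Pi.single j 1 + w) := by
  have hbj := weightedSum_single_pred_add_one hb1 hbrec (j := j) (mem_Icc.2 ⟨hj, by omega⟩)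
  rw [weightedSum_single_add_single_add (mem_Icc.2 ⟨by omega, by omega⟩)
      (mem_Icc.2 ⟨hj, by omega⟩), weightedSum_add, weightedSum_add,
    weightedSum_single_of_mem (mem_Icc.2 ⟨by omega, by omega⟩), hbrec i (by omega) hik]
  linarith

lemma weightedSum_one_carry_le (hsmono : ∀ i, 2 ≤ i → i ≤ k - 1 → s (i - 1) ≤ s i)
    {i j : ℕ} (hj : 1 ≤ j) (hji : j ≤ i) (hik : i ≤ k - 1) (w : ℕ → ℕ) :
    weightedSum k 1 (Pi.single (i + 1) 1 + Pi.single (j - 1) (s (j - 1)) + w) ≤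
      weightedSum k 1 (Pi.single i (s i) + Pi.single j 1 + w) := by
  have hD := weightedSum_one_single_pred_le (k := k) (j := j) (B := s i)
    fun hj2 => monotoneOn_Icc_one_of_pred_le hsmono ⟨by omega, by omega⟩ ⟨by omega, hik⟩ (by omega)
  rw [weightedSum_single_add_single_add (mem_Icc.2 ⟨by omega, by omega⟩)
      (mem_Icc.2 ⟨hj, by omega⟩), weightedSum_add, weightedSum_add,
    weightedSum_single_of_mem (mem_Icc.2 ⟨by omega, by omega⟩)]
  simp only [Pi.one_apply]
  omega

lemma weightedSum_pow_lt_carry {R i j : ℕ} (hR : s i + 2 ≤ R) (hj : 1 ≤ j) (hji : j ≤ i)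
    (hik : i ≤ k - 1) (w : ℕ → ℕ) :
    weightedSum k (R ^ ·) (Pi.single i (s i) + Pi.single j 1 + w) <
      weightedSum k (R ^ ·) (Pi.single (i + 1) 1 + Pi.single (j - 1) (s (j - 1)) + w) := by
  rw [weightedSum_single_add_single_add (mem_Icc.2 ⟨by omega, by omega⟩)
      (mem_Icc.2 ⟨hj, by omega⟩), weightedSum_add, weightedSum_add,
    weightedSum_single_of_mem (mem_Icc.2 ⟨by omega, by omega⟩)]
  have hRj : R ^ j ≤ R ^ i := Nat.pow_le_pow_right (by omega) hji
  have : R ^ i * s i + R ^ j * 1 < R ^ (i + 1) * 1 :=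
    calc R ^ i * s i + R ^ j * 1 ≤ R ^ i * (s i + 1) := by rw [mul_add_one]; omega
      _ < R ^ i * R := Nat.mul_lt_mul_of_pos_left (by omega) (pow_pos (by omega) i)
      _ = R ^ (i + 1) * 1 := by ring
  omega

theorem exists_isGreedy (hb1 : b 1 = 1)
    (hbrec : ∀ i, 1 ≤ i → i ≤ k - 1 → b (i + 1) = s i * b i + 1)
    (hsmono : ∀ i, 2 ≤ i → i ≤ k - 1 → s (i - 1) ≤ s i) (y : ℕ → ℕ) :
    ∃ z, weightedSum k b z = weightedSum k b y ∧ weightedSum k 1 z ≤ weightedSum k 1 y ∧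
      IsGreedy k s z := by
  -- Take `z` of maximal potential `∑ R ^ i * z i`: a carry would raise it.
  set R := s (k - 1) + 2
  set T : Set ℕ := {P | ∃ z, weightedSum k b z = weightedSum k b y ∧
    weightedSum k 1 z ≤ weightedSum k 1 y ∧ weightedSum k (R ^ ·) z = P}
  have hT : BddAbove T := by
    refine ⟨R ^ k * weightedSum k 1 y, ?_⟩
    rintro _ ⟨z, -, hz, rfl⟩
    calc weightedSum k (R ^ ·) z ≤ R ^ k * weightedSum k 1 z :=
          weightedSum_le_mul_weightedSum_one
            (fun i hi => Nat.pow_le_pow_right (by omega) (mem_Icc.1 hi).2) z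
      _ ≤ R ^ k * weightedSum k 1 y := Nat.mul_le_mul_left _ hz
  obtain ⟨z, hzb, hz1, hzR⟩ := Nat.sSup_mem (⟨_, y, rfl, le_rfl, rfl⟩ : T.Nonempty) hT
  have no_carry : ∀ i j, 1 ≤ j → j ≤ i → i ≤ k - 1 → ¬ Pi.single i (s i) + Pi.single j 1 ≤ z := by
    intro i j hj hji hik hle
    obtain ⟨w, rfl⟩ := exists_add_of_le hle
    have hR : s i + 2 ≤ R := Nat.add_le_add_right
      (monotoneOn_Icc_one_of_pred_le hsmono ⟨by omega, hik⟩ ⟨by omega, le_rfl⟩ hik) 2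
    have := le_csSup hT ⟨_, (weightedSum_carry hb1 hbrec hj hji hik w).trans hzb,
      (weightedSum_one_carry_le hsmono hj hji hik w).trans hz1, rfl⟩
    have := weightedSum_pow_lt_carry hR hj hji hik w
    omega
  refine ⟨z, hzb, hz1, ⟨fun i hi hik => ?_, fun i hi hik hzi j hj hji => ?_⟩⟩
  · by_contra! h
    refine no_carry i i hi le_rfl hik fun t => ?_
    simp only [Pi.add_apply, Pi.single_apply]
    split_ifs <;> subst_vars <;> omega
  · by_contra! h
    refine no_carry i j hj hji.le hik fun t => ?_
    simp only [Pi.add_apply, Pi.single_apply]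
    split_ifs <;> subst_vars <;> omega

lemma weightedSum_lt_of_isGreedy (hb1 : b 1 = 1)
    (hbrec : ∀ i, 1 ≤ i → i ≤ k - 1 → b (i + 1) = s i * b i + 1) {y : ℕ → ℕ}
    (hy : IsGreedy k s y) {j : ℕ} (hj : j < k) : weightedSum j b y < b (j + 1) := by
  induction j with
  | zero => simp [weightedSum, hb1]
  | succ j ih =>
    rw [weightedSum_succ, hbrec (j + 1) (by omega) (by omega)]
    rcases (hy.le (j + 1) (by omega) (by omega)).lt_or_eq with hlt | heq
    · have := ih (by omega)
      nlinarith
    · have hzero : weightedSum j b y = 0 := by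
        refine sum_eq_zero fun t ht => ?_
        obtain ⟨ht1, htj⟩ := mem_Icc.1 ht
        rw [hy.eq_zero_of_eq (j + 1) (by omega) (by omega) heq t ht1 (by omega), mul_zero]
      rw [hzero, heq, zero_add, mul_comm]
      exact Nat.lt_succ_self _

lemma weightedSum_succ_div_mod_of_isGreedy (hb1 : b 1 = 1)
    (hbrec : ∀ i, 1 ≤ i → i ≤ k - 1 → b (i + 1) = s i * b i + 1) {y : ℕ → ℕ}
    (hy : IsGreedy k s y) {j : ℕ} (hj : j < k) :
    weightedSum (j + 1) b y / b (j + 1) = y (j + 1) ∧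
      weightedSum (j + 1) b y % b (j + 1) = weightedSum j b y := by
  have hlt := weightedSum_lt_of_isGreedy hb1 hbrec hy hj
  exact (Nat.div_mod_unique (by omega)).2 ⟨(weightedSum_succ j y).symm, hlt⟩

theorem eq_of_isGreedy (hb1 : b 1 = 1)
    (hbrec : ∀ i, 1 ≤ i → i ≤ k - 1 → b (i + 1) = s i * b i + 1) {x y : ℕ → ℕ}
    (hx : IsGreedy k s x) (hy : IsGreedy k s y) (h : weightedSum k b x = weightedSum k b y) :
    ∀ i ∈ Icc 1 k, x i = y i := by
  have hprefix : ∀ j ≤ k, weightedSum j b x = weightedSum j b y := by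
    intro j hj
    induction hj using Nat.decreasingInduction with
    | self => exact h
    | of_succ j hj ih =>
      rw [← (weightedSum_succ_div_mod_of_isGreedy hb1 hbrec hx hj).2,
        ← (weightedSum_succ_div_mod_of_isGreedy hb1 hbrec hy hj).2, ih]
  intro i hi
  obtain ⟨j, rfl⟩ : ∃ j, i = j + 1 := ⟨i - 1, by have := (mem_Icc.1 hi).1; omega⟩
  have hj : j < k := by have := (mem_Icc.1 hi).2; omega
  rw [← (weightedSum_succ_div_mod_of_isGreedy hb1 hbrec hx hj).1,
    ← (weightedSum_succ_div_mod_of_isGreedy hb1 hbrec hy hj).1, hprefix (j + 1) hj]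

lemma one_le_of_mem_Icc (hb1 : b 1 = 1)
    (hbrec : ∀ i, 1 ≤ i → i ≤ k - 1 → b (i + 1) = s i * b i + 1) {j : ℕ} (hj : j ∈ Icc 1 k) :
    1 ≤ b j :=
  (weightedSum_single_pred_add_one hb1 hbrec hj).symm ▸ Nat.le_add_left 1 _

theorem weightedSum_one_le_of_isGreedy (hb1 : b 1 = 1)
    (hbrec : ∀ i, 1 ≤ i → i ≤ k - 1 → b (i + 1) = s i * b i + 1)
    (hsmono : ∀ i, 2 ≤ i → i ≤ k - 1 → s (i - 1) ≤ s i) {x y : ℕ → ℕ}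
    (hx : IsGreedy k s x) (h : weightedSum k b x = weightedSum k b y) :
    weightedSum k 1 x ≤ weightedSum k 1 y := by
  obtain ⟨z, hzb, hz1, hz⟩ := exists_isGreedy hb1 hbrec hsmono y
  calc weightedSum k 1 x = weightedSum k 1 z :=
        sum_congr rfl fun i hi => by rw [eq_of_isGreedy hb1 hbrec hx hz (h.trans hzb.symm) i hi]
    _ ≤ weightedSum k 1 y := hz1

lemma exists_weightedSum_eq_of_eq_add_one {u : ℕ} (hb1 : b 1 = 1)
    (hbrec : ∀ i, 1 ≤ i → i ≤ k - 1 → b (i + 1) = s i * b i + 1)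
    (hsu : ∀ i, 1 ≤ i → i ≤ k - 1 → s i ≤ u + 1) {y : ℕ → ℕ} {m : ℕ}
    (hy : weightedSum k b y = m + 1) :
    ∃ y', weightedSum k b y' = m ∧ weightedSum k 1 y' ≤ weightedSum k 1 y + u := by
  obtain ⟨j, hj, hyj⟩ := exists_ne_zero_of_weightedSum_ne_zero (hy.trans_ne m.succ_ne_zero)
  obtain ⟨w, rfl⟩ := exists_add_of_le (show Pi.single j 1 ≤ y from fun t => by
    simp only [Pi.single_apply]
    split_ifs <;> subst_vars <;> omega)
  have hbj := weightedSum_single_pred_add_one hb1 hbrec hj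
  have hD := weightedSum_one_single_pred_le (k := k) (j := j) (B := u + 1)
    fun hj2 => hsu (j - 1) (by omega) (by have := (mem_Icc.1 hj).2; omega)
  refine ⟨Pi.single (j - 1) (s (j - 1)) + w, ?_, ?_⟩
  · rw [weightedSum_add, weightedSum_single_of_mem hj] at hy
    rw [weightedSum_add]
    omega
  · rw [weightedSum_add, weightedSum_add, weightedSum_single_of_mem hj, Pi.one_apply]
    omega

lemma exists_weightedSum_eq_of_eq_add {u : ℕ} (hb1 : b 1 = 1)
    (hbrec : ∀ i, 1 ≤ i → i ≤ k - 1 → b (i + 1) = s i * b i + 1)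
    (hsu : ∀ i, 1 ≤ i → i ≤ k - 1 → s i ≤ u + 1) {m : ℕ} (n : ℕ) {y : ℕ → ℕ}
    (hy : weightedSum k b y = m + n) :
    ∃ y', weightedSum k b y' = m ∧ weightedSum k 1 y' ≤ weightedSum k 1 y + n * u := by
  induction n generalizing y with
  | zero => exact ⟨y, hy, by simp⟩
  | succ n ih =>
    obtain ⟨y₁, hy₁, hs₁⟩ := exists_weightedSum_eq_of_eq_add_one hb1 hbrec hsu hy
    obtain ⟨y', hy', hs'⟩ := ih hy₁
    exact ⟨y', hy', by rw [add_mul, one_mul]; omega⟩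

end Greedy

section Semigroup
variable {k : ℕ} (a u : ℕ) (d : ℤ) (b : ℕ → ℕ)

lemma sum_mul_generator (y : ℕ → ℕ) :
    ∑ i ∈ Icc 1 k, (y i : ℤ) * (((u : ℤ) * b i + 1) * a + d * b i) =
      (weightedSum k 1 y : ℤ) * a + (weightedSum k b y : ℤ) * (u * a + d) := by
  simp only [weightedSum, Pi.one_apply, one_mul]
  push_cast
  rw [sum_mul, sum_mul, ← sum_add_distrib]
  exact sum_congr rfl fun i _ => by ring

lemma exists_mul_add_sum_mul_generator_iff (N : ℤ) :
    (∃ y : ℕ → ℕ, N = (y 0 : ℤ) * a +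
        ∑ i ∈ Icc 1 k, (y i : ℤ) * (((u : ℤ) * b i + 1) * a + d * b i)) ↔
      ∃ t y, weightedSum k 1 y ≤ t ∧ N = (t : ℤ) * a + (weightedSum k b y : ℤ) * (u * a + d) := by
  simp only [sum_mul_generator]
  constructor
  · rintro ⟨y, rfl⟩
    exact ⟨y 0 + weightedSum k 1 y, y, Nat.le_add_left _ _, by push_cast; ring⟩
  · rintro ⟨t, y, hty, rfl⟩
    refine ⟨Function.update y 0 (t - weightedSum k 1 y), ?_⟩
    rw [weightedSum_update_zero, weightedSum_update_zero, Function.update_self, Nat.cast_sub hty]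
    ring

end Semigroup

lemma exists_lt_dvd_sub_mul {q : ℕ} {c : ℤ} (hq : 0 < q) (hco : IsCoprime (q : ℤ) c) (n : ℤ) :
    ∃ ℓ < q, (q : ℤ) ∣ n - ℓ * c := by
  obtain ⟨α, β, h⟩ := hco
  have hq' : (0 : ℤ) < q := by exact_mod_cast hq
  refine ⟨(n * β % q).toNat, ?_, n * α + n * β / q * c, ?_⟩
  · have := Int.emod_lt_of_pos (n * β) hq'
    omega
  · rw [Int.toNat_of_nonneg (Int.emod_nonneg _ hq'.ne'), Int.emod_def]
    linear_combination (-n) * h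

lemma mul_add_mul_ne_frobenius {a p S t m : ℕ} {c : ℤ} (hco : IsCoprime (a : ℤ) c) (hp : 0 < p)
    (hpa : p < a) (hSc : (S : ℤ) ≤ c) (hopt : m = a - p → S ≤ t) :
    (t : ℤ) * a + m * c ≠ S * a + (a - p) * c - a := by
  intro h
  obtain ⟨j, hj⟩ : (a : ℤ) ∣ m - (a - p) :=
    hco.dvd_of_dvd_mul_right ⟨S - 1 - t, by linear_combination h⟩
  have ha : (0 : ℤ) < a := by omega
  have hja : (a : ℤ) * (t + j * c - S + 1) = 0 := by linear_combination h - c * hj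
  rcases lt_trichotomy j 0 with hj0 | rfl | hj0
  · have : (a : ℤ) * j ≤ a * (-1) := mul_le_mul_of_nonneg_left (by omega) ha.le
    omega
  · have := hopt (by omega)
    have := (mul_eq_zero.1 hja).resolve_left ha.ne'
    omega
  · have := (mul_eq_zero.1 hja).resolve_left ha.ne'
    nlinarith

theorem exists_mul_add_mul_of_frobenius_lt {k u : ℕ} {b s : ℕ → ℕ} (hb1 : b 1 = 1)
    (hbrec : ∀ i, 1 ≤ i → i ≤ k - 1 → b (i + 1) = s i * b i + 1)
    (hsu : ∀ i, 1 ≤ i → i ≤ k - 1 → s i ≤ u + 1) {a p q : ℕ} {c : ℤ} (ha : a = p * q)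
    (hq : 0 < q) (hco : IsCoprime (q : ℤ) c) (huc : (u : ℤ) * a ≤ c) {x : ℕ → ℕ}
    (hx : weightedSum k b x = a - p) {n : ℤ}
    (hn : (weightedSum k 1 x : ℤ) * a + (a - p) * c - a < p * n) :
    ∃ t y, weightedSum k 1 y ≤ t ∧ p * n = (t : ℤ) * a + (weightedSum k b y : ℤ) * c := by
  obtain ⟨ℓ, hℓ, K, hK⟩ := exists_lt_dvd_sub_mul hq hco n
  obtain ⟨δ, rfl⟩ : ∃ δ, q = ℓ + δ + 1 := ⟨q - ℓ - 1, by omega⟩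
  obtain ⟨y, hy, hsize⟩ := exists_weightedSum_eq_of_eq_add hb1 hbrec hsu (δ * p)
    (m := ℓ * p) (hx.trans (by rw [ha]; exact Nat.sub_eq_of_eq_add (by ring)))
  have hsize' : (weightedSum k 1 y : ℤ) ≤ weightedSum k 1 x + δ * p * u := by exact_mod_cast hsize
  have hpn : (p : ℤ) * n = a * K + ℓ * p * c := by
    rw [ha]; push_cast at hK ⊢; linear_combination p * hK
  have hac : ((a : ℤ) - p) * c = ℓ * p * c + δ * p * c := by rw [ha]; push_cast; ring
  have hδ : (δ * p * u : ℤ) * a ≤ δ * p * c := by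
    rw [mul_assoc _ (u : ℤ)]
    exact mul_le_mul_of_nonneg_left huc (by positivity)
  have hT : (weightedSum k 1 y : ℤ) * a ≤ (weightedSum k 1 x + δ * p * u) * a :=
    mul_le_mul_of_nonneg_right hsize' (by positivity)
  have hKT : weightedSum k 1 y ≤ K := by
    by_contra! hlt
    have : (a : ℤ) * (K + 1) ≤ a * weightedSum k 1 y :=
      mul_le_mul_of_nonneg_left (by omega) (by positivity)
    linarith
  obtain ⟨t, rfl⟩ := Int.eq_ofNat_of_zero_le (hKT.trans' (by positivity))
  exact ⟨t, y, by exact_mod_cast hKT, by rw [hy, hpn]; push_cast; ring⟩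

theorem stmt_6_general (a k u p : ℕ) (d : ℤ) (b s : ℕ → ℕ)
    (ha : 2 ≤ a) (hu : 1 ≤ u)
    (hd : 0 < d) (hgcd : Int.gcd (a : ℤ) d = 1)
    (hb1 : b 1 = 1)
    (hbrec : ∀ i, 1 ≤ i → i ≤ k - 1 → b (i + 1) = s i * b i + 1)
    (hsmono : ∀ i, 2 ≤ i → i ≤ k - 1 → s (i - 1) ≤ s i)
    (hp : 0 < p) (hpa : p ∣ a) (hpne : p ≠ a)
    (hsu : ∀ i, 1 ≤ i → i ≤ k - 1 → s i ≤ u + 1)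
    -- `x` is the greedy presentation of `a - p`
    (x : ℕ → ℕ)
    (hxsum : ∑ i ∈ Finset.Icc 1 k, b i * x i = a - p)
    (hxle : ∀ i, 1 ≤ i → i ≤ k - 1 → x i ≤ s i)
    (hxzero : ∀ i, 2 ≤ i → i ≤ k - 1 → x i = s i → ∀ j, 1 ≤ j → j < i → x j = 0) :
    IsGreatest {z : ℤ | ¬ ∃ n : ℕ, (n : ℤ) = z ∧
        ∃ y : ℕ → ℕ, (p * n : ℤ) = (y 0 : ℤ) * a +
          ∑ i ∈ Finset.Icc 1 k, (y i : ℤ) * (((u : ℤ) * b i + 1) * a + d * b i)}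
      (((∑ i ∈ Finset.Icc 1 k, x i : ℕ) : ℤ) * ((a / p : ℕ) : ℤ) +
        (((a / p : ℕ) : ℤ) - 1) * ((u : ℤ) * a + d) - ((a / p : ℕ) : ℤ)) := by
  obtain ⟨q, hq⟩ := hpa
  have hpa' : p < a := lt_of_le_of_ne (Nat.le_of_dvd (by omega) ⟨q, hq⟩) hpne
  have hq2 : 2 ≤ q := by
    by_contra! h
    interval_cases q <;> omega
  have hqa : (a : ℤ) = p * q := by exact_mod_cast hq
  rw [hq, Nat.mul_div_cancel_left q hp, ← hq, ← weightedSum_one]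
  have hco : IsCoprime (a : ℤ) (u * a + d) := by
    simpa [add_comm, mul_comm] using (Int.isCoprime_iff_gcd_eq_one.2 hgcd).add_mul_left_right u
  have hac : (a : ℤ) < u * a + d := by nlinarith
  have hxg : IsGreedy k s x := ⟨hxle, hxzero⟩
  have hSa : weightedSum k 1 x ≤ a - p :=
    hxsum ▸ weightedSum_one_le (fun i hi => one_le_of_mem_Icc hb1 hbrec hi) x
  refine ⟨fun ⟨n, hn, hrep⟩ => ?_, fun z hz => ?_⟩
  · obtain ⟨t, y, hty, heq⟩ := (exists_mul_add_sum_mul_generator_iff a u d b _).1 hrep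
    have hopt : weightedSum k b y = a - p → weightedSum k 1 x ≤ t := fun hy =>
      (weightedSum_one_le_of_isGreedy hb1 hbrec hsmono hxg (hxsum.trans hy.symm)).trans hty
    refine mul_add_mul_ne_frobenius hco hp hpa' (by omega) hopt ?_
    rw [← heq, hn, hqa]
    ring
  · by_contra! hlt
    lift z to ℕ using by nlinarith
    refine hz ⟨z, rfl, (exists_mul_add_sum_mul_generator_iff a u d b _).2
      (exists_mul_add_mul_of_frobenius_lt hb1 hbrec hsu hq (by omega) ?_ (by linarith) hxsum ?_)⟩
    · exact IsCoprime.of_mul_left_right (x := (p : ℤ)) (by rwa [← hqa])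
    · have := mul_lt_mul_of_pos_left hlt (show (0 : ℤ) < p by exact_mod_cast hp)
      linear_combination this + (weightedSum k 1 x + (u * a + d) - 1 : ℤ) * hqa

/-- Frobenius number of the quotient of a GCNS numerical semigroup with
positive `d`. If `u·a + d + k − 2 ≥ Σ s_i` and `s_i ≤ u + 1` for all `i`, then
`F(⟨A⟩/p) = (Σ x_i)·(a/p) + (a/p − 1)·(u·a + d) − a/p`, where `(x_1,…,x_k)` is the
greedy presentation of `a − p`. -/
theorem stmt_6 (a k u p : ℕ) (d : ℤ) (b s : ℕ → ℕ)
    (ha : 2 ≤ a) (hk : 2 ≤ k) (hu : 1 ≤ u)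
    (hd : 0 < d) (hgcd : Int.gcd (a : ℤ) d = 1)
    (hb1 : b 1 = 1)
    (hbrec : ∀ i, 1 ≤ i → i ≤ k - 1 → b (i + 1) = s i * b i + 1)
    (hs1 : ∀ i, 1 ≤ i → i ≤ k - 1 → 1 ≤ s i)
    (hsmono : ∀ i, 2 ≤ i → i ≤ k - 1 → s (i - 1) ≤ s i)
    (hp : 0 < p) (hpa : p ∣ a) (hpne : p ≠ a)
    (hcond : (∑ i ∈ Finset.Icc 1 (k - 1), (s i : ℤ)) ≤ (u : ℤ) * a + d + k - 2)
    (hsu : ∀ i, 1 ≤ i → i ≤ k - 1 → s i ≤ u + 1)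
    -- `x` is the greedy presentation of `a - p`
    (x : ℕ → ℕ)
    (hxsum : ∑ i ∈ Finset.Icc 1 k, b i * x i = a - p)
    (hxk : x k = (a - p) / b k)
    (hxle : ∀ i, 1 ≤ i → i ≤ k - 1 → x i ≤ s i)
    (hxzero : ∀ i, 2 ≤ i → i ≤ k - 1 → x i = s i → ∀ j, 1 ≤ j → j < i → x j = 0) :
    IsGreatest {z : ℤ | ¬ ∃ n : ℕ, (n : ℤ) = z ∧
        ∃ y : ℕ → ℕ, (p * n : ℤ) = (y 0 : ℤ) * a +
          ∑ i ∈ Finset.Icc 1 k, (y i : ℤ) * (((u : ℤ) * b i + 1) * a + d * b i)}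
      (((∑ i ∈ Finset.Icc 1 k, x i : ℕ) : ℤ) * ((a / p : ℕ) : ℤ) +
        (((a / p : ℕ) : ℤ) - 1) * ((u : ℤ) * a + d) - ((a / p : ℕ) : ℤ)) :=
  stmt_6_general a k u p d b s ha hu hd hgcd hb1 hbrec hsmono hp hpa hpne hsu x hxsum hxle hxzero
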